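/- Let μ(X) = ∑_{n≥2} n² e^{-π(n²-1)X} and ν(X) = ∑_{n≥2} n⁴ e^{-π(n²-1)X}. Then μ and ν are strictly decreasing functions of X on (0, ∞), and μ(3/5) < 1. -/

import Mathlib

noncomputable def muSum (X : ℝ) : ℝ :=
  ∑' n : ℕ, ((n : ℝ) + 2)^2 * Real.exp (-Real.pi * (((n : ℝ) + 2)^2 - 1) * X)

noncomputable def nuSum (X : ℝ) : ℝ :=
  ∑' n : ℕ, ((n : ℝ) + 2)^4 * Real.exp (-Real.pi * (((n : ℝ) + 2)^2 - 1) * X)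

/-!
Every term of both series is strictly decreasing in `X`, and a sum of summable antitone
functions with one strictly antitone term is strictly antitone. For the numerical bound,
`(n + 2)² - 1 ≥ 3 (n + 1)` and `(n + 2)² ≤ 4 · 3ⁿ` dominate the series for `μ(X)` by the
geometric series `4q ∑ (3q)ⁿ = 4q / (1 - 3q)` with `q = e^{-3πX}`; at `X = 3/5` one has
`q < e^{-5} < 1/100`.
-/

open Real

theorem StrictAntiOn.tsum {ι α : Type*} [Preorder α] {f : ι → α → ℝ} {s : Set α}
    (hsum : ∀ x ∈ s, Summable fun i => f i x) (hanti : ∀ i, AntitoneOn (f i) s) {i₀ : ι}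
    (hstrict : StrictAntiOn (f i₀) s) : StrictAntiOn (fun x => ∑' i, f i x) s :=
  fun _ hx _ hy hxy =>
    (hsum _ hy).tsum_lt_tsum (fun i => hanti i hx hy hxy.le) (hstrict hx hy hxy) (hsum _ hx)

noncomputable def thetaTerm (k : ℕ) (X : ℝ) (n : ℕ) : ℝ :=
  ((n : ℝ) + 2)^k * exp (-π * (((n : ℝ) + 2)^2 - 1) * X)

theorem strictAnti_thetaTerm (k n : ℕ) : StrictAnti fun X => thetaTerm k X n := by
  have hexponent : 0 < π * (((n : ℝ) + 2)^2 - 1) := by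
    have : (1 : ℝ) < ((n : ℝ) + 2)^2 := by nlinarith [n.cast_nonneg (α := ℝ)]
    exact mul_pos pi_pos (by linarith)
  intro X Y hXY
  refine mul_lt_mul_of_pos_left (exp_lt_exp.mpr ?_) (by positivity)
  nlinarith

theorem exp_neg_pi_mul_le_pow {X : ℝ} (hX : 0 ≤ X) (n : ℕ) :
    exp (-π * (((n : ℝ) + 2)^2 - 1) * X) ≤ exp (-3 * π * X) ^ (n + 1) := by
  rw [← exp_nat_mul, exp_le_exp]
  have hπX : 0 ≤ π * X := mul_nonneg pi_pos.le hX
  push_cast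
  nlinarith [mul_nonneg hπX (mul_nonneg n.cast_nonneg n.cast_nonneg), mul_nonneg hπX n.cast_nonneg]

theorem summable_thetaTerm (k : ℕ) {X : ℝ} (hX : 0 < X) : Summable (thetaTerm k X) := by
  set q := exp (-3 * π * X)
  have hq : ‖q‖ < 1 := by
    rw [norm_of_nonneg (exp_pos _).le, exp_lt_one_iff]
    nlinarith [mul_pos pi_pos hX]
  have hshifted : Summable fun n : ℕ => ((n : ℝ) + 2)^k * q^(n + 2) := by
    have := (summable_nat_add_iff (f := fun m : ℕ => (m : ℝ)^k * q^m) 2).mpr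
      (summable_pow_mul_geometric_of_norm_lt_one k hq)
    exact_mod_cast this
  have hdominant : Summable fun n : ℕ => ((n : ℝ) + 2)^k * q^(n + 1) :=
    (hshifted.mul_left q⁻¹).congr fun n => by
      have : q ≠ 0 := (exp_pos _).ne'
      field_simp
      ring
  refine hdominant.of_nonneg_of_le (fun n => by unfold thetaTerm; positivity) fun n => ?_
  exact mul_le_mul_of_nonneg_left (exp_neg_pi_mul_le_pow hX.le n) (by positivity)

theorem strictAntiOn_tsum_thetaTerm (k : ℕ) :
    StrictAntiOn (fun X => ∑' n, thetaTerm k X n) (Set.Ioi 0) :=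
  StrictAntiOn.tsum (fun _ hX => summable_thetaTerm k hX)
    (fun n => (strictAnti_thetaTerm k n).antitone.antitoneOn _)
    ((strictAnti_thetaTerm k 0).strictAntiOn _)

theorem add_two_sq_le_four_mul_three_pow (n : ℕ) : ((n : ℝ) + 2)^2 ≤ 4 * 3^n := by
  induction n with
  | zero => norm_num
  | succ m ih =>
    push_cast
    rw [pow_succ (3 : ℝ) m]
    nlinarith [m.cast_nonneg (α := ℝ)]

theorem thetaTerm_two_le {X : ℝ} (hX : 0 ≤ X) (n : ℕ) :
    thetaTerm 2 X n ≤ 4 * exp (-3 * π * X) * (3 * exp (-3 * π * X))^n :=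
  calc thetaTerm 2 X n ≤ 4 * 3^n * exp (-3 * π * X) ^ (n + 1) :=
        mul_le_mul (add_two_sq_le_four_mul_three_pow n) (exp_neg_pi_mul_le_pow hX n)
          (exp_pos _).le (by positivity)
    _ = 4 * exp (-3 * π * X) * (3 * exp (-3 * π * X))^n := by ring

theorem muSum_le {X : ℝ} (hX : 0 < X) (hq : 3 * exp (-3 * π * X) < 1) :
    muSum X ≤ 4 * exp (-3 * π * X) / (1 - 3 * exp (-3 * π * X)) := by
  have hgeom := summable_geometric_of_lt_one (by positivity) hq
  calc muSum X = ∑' n, thetaTerm 2 X n := rfl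
    _ ≤ ∑' n : ℕ, 4 * exp (-3 * π * X) * (3 * exp (-3 * π * X))^n :=
      (summable_thetaTerm 2 hX).tsum_le_tsum (thetaTerm_two_le hX.le) (hgeom.mul_left _)
    _ = 4 * exp (-3 * π * X) / (1 - 3 * exp (-3 * π * X)) := by
      rw [tsum_mul_left, tsum_geometric_of_lt_one (by positivity) hq, div_eq_mul_inv]

theorem exp_neg_nine_pi_div_five_lt : exp (-3 * π * (3 / 5)) < 1 / 100 := by
  have hexp_five : 100 < exp 5 := by
    have h : 2.7 ^ 5 < exp 1 ^ 5 :=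
      pow_lt_pow_left₀ (by linarith [exp_one_gt_d9]) (by norm_num) (by norm_num)
    rw [← exp_nat_mul] at h
    norm_num at h
    linarith
  have h : 100 < exp (3 * π * (3 / 5)) :=
    hexp_five.trans_le (exp_le_exp.mpr (by linarith [pi_gt_three]))
  rw [neg_mul, neg_mul, exp_neg, one_div]
  exact inv_strictAnti₀ (by norm_num) h

theorem mu_nu_antitone_and_mu_lt_one :
    StrictAntiOn muSum (Set.Ioi (0 : ℝ)) ∧ StrictAntiOn nuSum (Set.Ioi (0 : ℝ)) ∧
      muSum (3/5) < 1 := by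
  refine ⟨strictAntiOn_tsum_thetaTerm 2, strictAntiOn_tsum_thetaTerm 4, ?_⟩
  have hq := exp_neg_nine_pi_div_five_lt
  have hq0 := exp_pos (-3 * π * (3 / 5))
  calc muSum (3/5) ≤ 4 * exp (-3 * π * (3 / 5)) / (1 - 3 * exp (-3 * π * (3 / 5))) :=
        muSum_le (by norm_num) (by linarith)
    _ < 1 := by rw [div_lt_one (by linarith)]; linarith
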